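/- arXiv:1010.5454 — 2 statements merged into one kernel-verified Lean document; each statement's English description precedes it below -/
import Mathlib

section
/- Every translation-bi-invariant closed subspace F of l^∞(ℕ₀, X) (i.e., a nontrivial closed subspace with S^{-1}(F) = F, where S is the shift operator) contains c₀(ℕ₀, X), the space of sequences converging to 0. -/
/-! Since `S y ∈ F` forces `y ∈ F` and `0 ∈ F`, induction on `N` puts every sequence vanishing
from `N` on into `F`. The truncations of `x ∈ c₀` to `[0, N)` converge to `x` in the sup norm,
so `x ∈ F` because `F` is closed. -/


noncomputable section
open Filter Topology Metric Set

variable (X : Type*) [NormedAddCommGroup X] [NormedSpace ℂ X]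

/-- `l^∞(ℕ₀, X)`, bounded `X`-valued sequences with sup norm. -/
abbrev Linf := lp (fun _ : ℕ => X) ⊤

/-- The shift (translation) operator on `l^∞` as a linear map. -/
def shiftl : Linf X →ₗ[ℂ] Linf X where
  toFun x := ⟨fun n => x (n + 1), memℓp_infty (by
    obtain ⟨C, hC⟩ := (memℓp_infty_iff.1 (lp.memℓp x))
    exact ⟨C, by rintro - ⟨n, rfl⟩; exact hC ⟨n + 1, rfl⟩⟩)⟩
  map_add' x y := by ext n; simp [lp.coeFn_add] <;> rfl
  map_smul' c x := by ext n; simp [lp.coeFn_smul]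

@[simp] lemma shiftl_apply (x : Linf X) (n : ℕ) : (shiftl X x : ∀ _ : ℕ, X) n = x (n + 1) := rfl

/-- The shift operator on `l^∞` as a continuous linear map. -/
def shiftL : Linf X →L[ℂ] Linf X :=
  (shiftl X).mkContinuous 1 (fun x => by
    rw [one_mul]
    exact lp.norm_le_of_forall_le (norm_nonneg x) fun n =>
      lp.norm_apply_le_norm ENNReal.top_ne_zero x (n + 1))

/-- `c₀(ℕ₀, X)`, the subspace of sequences tending to `0`. -/
def c0 : Submodule ℂ (Linf X) where
  carrier := {x | Tendsto (fun n => x n) atTop (nhds 0)}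
  zero_mem' := by simpa [lp.coeFn_zero] using tendsto_const_nhds
  add_mem' := by
    intro a b ha hb
    have := ha.add hb
    simp only [lp.coeFn_add, Pi.add_apply, add_zero] at this ⊢
    exact this
  smul_mem' := by
    intro c a ha
    have : Tendsto (fun n => c • (a : ∀ _ : ℕ, X) n) atTop (nhds (c • (0:X))) := ha.const_smul c
    simpa [lp.coeFn_smul] using this

instance c0_isClosed : IsClosed ((c0 X : Set (Linf X))) := by
  refine IsSeqClosed.isClosed ?_
  intro f x hf hfx
  show Tendsto (fun n => (x : ∀ _ : ℕ, X) n) atTop (nhds 0)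
  rw [Metric.tendsto_atTop] at hfx ⊢
  intro ε hε
  obtain ⟨K, hK⟩ := hfx (ε / 2) (by positivity)
  have h2 : Tendsto (fun n => (f K : ∀ _ : ℕ, X) n) atTop (nhds 0) := hf K
  rw [Metric.tendsto_atTop] at h2
  obtain ⟨N, hN⟩ := h2 (ε / 2) (by positivity)
  refine ⟨N, fun n hn => ?_⟩
  have h3 : ‖(x : ∀ _ : ℕ, X) n - (f K : ∀ _ : ℕ, X) n‖ ≤ ‖x - f K‖ := by
    have := lp.norm_apply_le_norm ENNReal.top_ne_zero (x - f K) n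
    simpa [lp.coeFn_sub] using this
  have h4 : ‖x - f K‖ < ε / 2 := by
    have := hK K le_rfl
    rwa [dist_comm, dist_eq_norm] at this
  have h5 : ‖(f K : ∀ _ : ℕ, X) n‖ < ε / 2 := by
    have := hN n hn
    rwa [dist_eq_norm, sub_zero] at this
  have : ‖(x : ∀ _ : ℕ, X) n‖ ≤ ‖(x : ∀ _ : ℕ, X) n - (f K : ∀ _ : ℕ, X) n‖ + ‖(f K : ∀ _ : ℕ, X) n‖ := by
    simpa using norm_add_le ((x : ∀ _ : ℕ, X) n - (f K : ∀ _ : ℕ, X) n) ((f K : ∀ _ : ℕ, X) n)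
  rw [dist_eq_norm, sub_zero]
  calc ‖(x : ∀ _ : ℕ, X) n‖ ≤ _ + _ := this
    _ < ε / 2 + ε / 2 := add_lt_add (lt_of_le_of_lt h3 h4) h5
    _ = ε := add_halves ε

/-- The quotient space `Y = l^∞/c₀`. -/
abbrev YQ := Linf X ⧸ c0 X

lemma c0_shift_invariant : c0 X ≤ (c0 X).comap (shiftl X) := by
  intro x hx
  have : Tendsto (fun n => (x : ∀ _ : ℕ, X) (n + 1)) atTop (nhds 0) :=
    hx.comp (tendsto_add_atTop_nat 1)
  exact this

/-- The operator `S̄` induced by the shift on the quotient `Y`, as a linear map. -/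
def SbarL : YQ X →ₗ[ℂ] YQ X := (c0 X).mapQ (c0 X) (shiftl X) (c0_shift_invariant X)

/-- `S̄` as a continuous linear map on `Y`. -/
def Sbar : YQ X →L[ℂ] YQ X :=
  (SbarL X).mkContinuous 1 (by
    intro q
    rw [one_mul]
    refine le_of_forall_pos_le_add ?_
    intro ε hε
    obtain ⟨m, hm, hlt⟩ := Submodule.Quotient.norm_mk_lt q hε
    have h1 : SbarL X q = Submodule.Quotient.mk (shiftl X m) := by
      rw [← hm]; rfl
    calc ‖SbarL X q‖ = ‖(Submodule.Quotient.mk (shiftl X m) : YQ X)‖ := by rw [h1]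
      _ ≤ ‖shiftl X m‖ := Submodule.Quotient.norm_mk_le _ _
      _ ≤ ‖m‖ := by
          exact lp.norm_le_of_forall_le (norm_nonneg m) fun n =>
            lp.norm_apply_le_norm ENNReal.top_ne_zero m (n + 1)
      _ ≤ ‖q‖ + ε := hlt.le)

/-- The spectrum of a bounded sequence `x`: the set of points `z₀` of the unit circle at
which the `Y`-valued resolvent function `λ ↦ R(λ, S̄) x̄` (defined for `|λ| ≠ 1`) has no
holomorphic extension. -/
def specSeq (x : Linf X) : Set ℂ :=
  {z₀ : ℂ | ‖z₀‖ = 1 ∧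
    ¬ ∃ (U : Set ℂ) (h : ℂ → YQ X), IsOpen U ∧ z₀ ∈ U ∧ DifferentiableOn ℂ h U ∧
      ∀ z ∈ U, ‖z‖ ≠ 1 → z • h z - SbarL X (h z) = Submodule.Quotient.mk x}

namespace lp

variable {E : ℕ → Type*} [∀ n, NormedAddCommGroup (E n)]

def truncate (N : ℕ) (x : lp E ⊤) : lp E ⊤ :=
  ⟨fun n => if n < N then x n else 0, memℓp_infty ⟨‖x‖, by
    rintro - ⟨n, rfl⟩
    dsimp only
    split_ifs
    · exact norm_apply_le_norm ENNReal.top_ne_zero x n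
    · simp⟩⟩

theorem truncate_apply_of_le {N n : ℕ} (x : lp E ⊤) (h : N ≤ n) : truncate N x n = 0 :=
  if_neg (Nat.not_lt.2 h)

theorem tendsto_truncate {x : lp E ⊤} (hx : Tendsto (fun n => ‖x n‖) atTop (𝓝 0)) :
    Tendsto (fun N => truncate N x) atTop (𝓝 x) := by
  rw [Metric.tendsto_atTop]
  intro ε hε
  obtain ⟨N₀, hN₀⟩ := eventually_atTop.1 (hx.eventually (ge_mem_nhds (half_pos hε)))
  refine ⟨N₀, fun N hN => ?_⟩
  have hcoord : ∀ n, ‖(truncate N x - x) n‖ ≤ ε / 2 := by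
    intro n
    rw [coeFn_sub, Pi.sub_apply]
    by_cases hn : n < N
    · simpa [truncate, hn] using (half_pos hε).le
    · simpa [truncate, hn] using hN₀ n (by omega)
  rw [dist_eq_norm]
  exact (norm_le_of_forall_le (half_pos hε).le hcoord).trans_lt (half_lt_self hε)

end lp

theorem mem_of_forall_ge_eq_zero {F : Submodule ℂ (Linf X)}
    (hF : ⇑(shiftL X) ⁻¹' (F : Set (Linf X)) ⊆ F) (N : ℕ) {y : Linf X}
    (hy : ∀ n, N ≤ n → y n = 0) : y ∈ F := by
  induction N generalizing y with
  | zero =>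
    have : y = 0 := by ext n; exact hy n n.zero_le
    exact this ▸ F.zero_mem
  | succ N ih => exact hF (ih fun n hn => hy (n + 1) (by omega))

theorem stmt0 (F : Submodule ℂ (Linf X)) (hclosed : IsClosed (F : Set (Linf X)))
    (hbi : ⇑(shiftL X) ⁻¹' (F : Set (Linf X)) = (F : Set (Linf X))) :
    c0 X ≤ F := by
  intro x hx
  have htrunc : ∀ N, lp.truncate N x ∈ F := fun N =>
    mem_of_forall_ge_eq_zero X hbi.subset N fun _ => lp.truncate_apply_of_le x
  exact hclosed.mem_of_tendsto (lp.tendsto_truncate (tendsto_zero_iff_norm_tendsto_zero.1 hx))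
    (Eventually.of_forall htrunc)
end
end

section
/- Let U be an open set containing the closed disk B̄(iη, 2r), h : U → X holomorphic, and c ≥ 0, k ∈ ℕ₀ such that ‖h(z)‖ ≤ c/|Re z|^k whenever |z − iη| = 2r and Re z ≠ 0. Then ‖h(z)‖ ≤ (4/3)^k c / r^k for all z ∈ B̄(iη, r). -/
/-! Multiply `h` by `p z = ((z - iη)² + (2r)²)^k`. On the circle `|z - iη| = 2r` one has
`(z - iη)² + (2r)² = 2 Re z · (z - iη)`, so `|p z| = (4r |Re z|)^k` cancels the singularity of the
bound: `‖p h‖ ≤ (4r)^k c` on the circle, at its two points on the imaginary axis by continuity.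
The maximum principle carries this into the disk, and on `B̄(iη, r)` one has `|p z| ≥ (3r²)^k`. -/

open Metric Complex Filter Topology

lemma sq_add_sq_eq_of_norm_eq {ζ : ℂ} {R : ℝ} (h : ‖ζ‖ = R) :
    ζ ^ 2 + (R : ℂ) ^ 2 = 2 * ζ.re * ζ := by
  have hR : (R : ℂ) ^ 2 = ζ * (starRingEnd ℂ) ζ := by
    rw [mul_conj, normSq_eq_norm_sq, h]; push_cast; ring
  have hre : (2 * ζ.re : ℂ) = ζ + (starRingEnd ℂ) ζ := by
    rw [add_conj]; push_cast; ring
  rw [hR, hre]; ring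

lemma norm_sq_add_sq_of_norm_eq {ζ : ℂ} {R : ℝ} (h : ‖ζ‖ = R) :
    ‖ζ ^ 2 + (R : ℂ) ^ 2‖ = 2 * R * |ζ.re| := by
  rw [sq_add_sq_eq_of_norm_eq h, norm_mul, norm_mul, h, norm_real, Real.norm_eq_abs]
  norm_num; ring

lemma sub_sq_le_norm_sq_add_sq {ζ : ℂ} {ρ : ℝ} (h : ‖ζ‖ ≤ ρ) (R : ℝ) :
    R ^ 2 - ρ ^ 2 ≤ ‖ζ ^ 2 + (R : ℂ) ^ 2‖ := by
  have hζ : ‖ζ ^ 2‖ ≤ ρ ^ 2 := by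
    rw [norm_pow]; exact pow_le_pow_left₀ (norm_nonneg _) h 2
  have hR : ‖(R : ℂ) ^ 2‖ = R ^ 2 := by simp
  have htri := norm_sub_norm_le ((R : ℂ) ^ 2) (-(ζ ^ 2))
  rw [hR, norm_neg, sub_neg_eq_add, add_comm] at htri
  linarith

lemma sphere_subset_closure_sphere_inter_re_ne_zero {w : ℂ} (hw : w.re = 0) {R : ℝ}
    (hR : 0 < R) : sphere w R ⊆ closure (sphere w R ∩ {z | z.re ≠ 0}) := by
  intro z hz
  rcases ne_or_eq z.re 0 with hz0 | hz0
  · exact subset_closure ⟨hz, hz0⟩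
  set t := (z - w).im
  have hzw : z - w = t * I := by apply Complex.ext <;> simp [t, hz0, hw]
  have ht : t ≠ 0 := by
    rintro ht
    rw [mem_sphere, dist_eq, hzw, ht] at hz
    simp at hz; linarith
  set γ : ℝ → ℂ := fun θ => w + (z - w) * exp (θ * I)
  have hγ : Tendsto γ (𝓝[>] 0) (𝓝 z) := by
    have : γ 0 = z := by simp [γ]
    rw [← this]
    exact ((by fun_prop : Continuous γ).tendsto 0).mono_left nhdsWithin_le_nhds
  refine mem_closure_of_tendsto hγ ?_
  filter_upwards [Ioo_mem_nhdsGT Real.pi_pos] with θ hθ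
  refine ⟨?_, ?_⟩
  · simpa [γ, dist_eq] using hz
  · have : (γ θ).re = -(t * Real.sin θ) := by
      simp [γ, hzw, hw, exp_ofReal_mul_I_re, exp_ofReal_mul_I_im]
    rw [Set.mem_ofPred_eq, this, neg_ne_zero]
    exact mul_ne_zero ht (Real.sin_pos_of_pos_of_lt_pi hθ.1 hθ.2).ne'

lemma norm_sq_add_sq_pow_smul_le {X : Type*} [NormedAddCommGroup X] [NormedSpace ℂ X]
    {w : ℂ} (hw : w.re = 0) {R : ℝ} (hR : 0 < R) {g : ℂ → X}
    (hg : DifferentiableOn ℂ g (closedBall w R)) {c : ℝ} {k : ℕ}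
    (hbound : ∀ z : ℂ, dist z w = R → z.re ≠ 0 → ‖g z‖ ≤ c / |z.re| ^ k) :
    ∀ z ∈ closedBall w R, ‖((z - w) ^ 2 + (R : ℂ) ^ 2) ^ k • g z‖ ≤ (2 * R) ^ k * c := by
  set F : ℂ → X := fun z => ((z - w) ^ 2 + (R : ℂ) ^ 2) ^ k • g z
  have hF : DifferentiableOn ℂ F (closedBall w R) := by fun_prop
  have hsphere : ∀ z ∈ sphere w R ∩ {z | z.re ≠ 0}, ‖F z‖ ≤ (2 * R) ^ k * c := by
    rintro z ⟨hz, hre⟩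
    have hzw : ‖z - w‖ = R := by rwa [← dist_eq]
    have habs : 0 < |z.re| := abs_pos.mpr hre
    calc ‖F z‖ = (2 * R * |z.re|) ^ k * ‖g z‖ := by
          simp only [F, norm_smul, norm_pow, norm_sq_add_sq_of_norm_eq hzw, sub_re, hw, sub_zero]
      _ ≤ (2 * R * |z.re|) ^ k * (c / |z.re| ^ k) := by gcongr; exact hbound z hz hre
      _ = (2 * R) ^ k * c := by field_simp; ring
  have hfrontier : ∀ z ∈ frontier (ball w R), ‖F z‖ ≤ (2 * R) ^ k * c := by
    rw [frontier_ball w hR.ne']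
    intro z hz
    exact ContinuousWithinAt.closure_le (sphere_subset_closure_sphere_inter_re_ne_zero hw hR hz)
      ((hF.continuousOn z (sphere_subset_closedBall hz)).mono
        (Set.inter_subset_left.trans sphere_subset_closedBall)).norm
      continuousWithinAt_const hsphere
  intro z hz
  rw [← closure_ball w hR.ne'] at hz hF
  exact Complex.norm_le_of_forall_mem_frontier_norm_le isBounded_ball hF.diffContOnCl hfrontier hz

theorem stmt13_general (X : Type*) [NormedAddCommGroup X] [NormedSpace ℂ X]
    (η : ℝ) (r : ℝ) (hr : 0 < r) (U : Set ℂ)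
    (hsub : closedBall ((η : ℂ) * Complex.I) (2 * r) ⊆ U)
    (h : ℂ → X) (hh : DifferentiableOn ℂ h U) (c : ℝ) (k : ℕ)
    (hbound : ∀ z : ℂ, dist z ((η : ℂ) * Complex.I) = 2 * r → z.re ≠ 0 →
      ‖h z‖ ≤ c / |z.re| ^ k) :
    ∀ z ∈ closedBall ((η : ℂ) * Complex.I) r, ‖h z‖ ≤ (4 / 3) ^ k * c / r ^ k := by
  intro z hz
  have hweighted := norm_sq_add_sq_pow_smul_le (by simp) (by positivity)
    (hh.mono hsub) hbound z (closedBall_subset_closedBall (by linarith) hz)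
  have hweight : (3 * r ^ 2) ^ k ≤ ‖((z - η * I) ^ 2 + ((2 * r : ℝ) : ℂ) ^ 2) ^ k‖ := by
    have hlow := sub_sq_le_norm_sq_add_sq (mem_closedBall_iff_norm.mp hz) (2 * r)
    rw [norm_pow]
    exact pow_le_pow_left₀ (by positivity) (by linarith) k
  have hcleared : (3 * r ^ 2) ^ k * ‖h z‖ ≤ (4 * r) ^ k * c := by
    calc (3 * r ^ 2) ^ k * ‖h z‖
        ≤ ‖((z - η * I) ^ 2 + ((2 * r : ℝ) : ℂ) ^ 2) ^ k‖ * ‖h z‖ := by gcongr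
      _ ≤ (2 * (2 * r)) ^ k * c := by rwa [← norm_smul]
      _ = (4 * r) ^ k * c := by ring
  have hrk : (4 / 3) ^ k * c / r ^ k = (4 * r) ^ k * c / (3 * r ^ 2) ^ k := by
    rw [div_pow]; field_simp; ring
  rw [hrk, le_div_iff₀ (by positivity)]
  linarith

/-- a maximum-principle type estimate. If `h` is holomorphic on an open set
containing the closed disk `B̄(iη, 2r)` and `‖h(z)‖ ≤ c/|Re z|^k` on the circle
`|z - iη| = 2r` (for `Re z ≠ 0`), then `‖h(z)‖ ≤ (4/3)^k c / r^k` on `B̄(iη, r)`. -/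
theorem stmt13 (X : Type*) [NormedAddCommGroup X] [NormedSpace ℂ X] [CompleteSpace X]
    (η : ℝ) (r : ℝ) (hr : 0 < r) (U : Set ℂ) (hU : IsOpen U)
    (hsub : closedBall ((η : ℂ) * Complex.I) (2 * r) ⊆ U)
    (h : ℂ → X) (hh : DifferentiableOn ℂ h U) (c : ℝ) (hc : 0 ≤ c) (k : ℕ)
    (hbound : ∀ z : ℂ, dist z ((η : ℂ) * Complex.I) = 2 * r → z.re ≠ 0 →
      ‖h z‖ ≤ c / |z.re| ^ k) :
    ∀ z ∈ closedBall ((η : ℂ) * Complex.I) r, ‖h z‖ ≤ (4 / 3) ^ k * c / r ^ k :=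
  stmt13_general X η r hr U hsub h hh c k hbound
end
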